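/- The class of context-free spanners is not closed under natural join: there exist context-free spanners S1 and S2 such that no context-free spanner equals their natural join S1 ⋈ S2. -/

import Mathlib

/-- A variable operation: `(x, true)` is `⊢x` (open), `(x, false)` is `⊣x` (close). -/
abbrev VarOp (X : Type) : Type := X × Bool

/-- A ref-word: a word over the extended alphabet `Σ ∪ Γ_X`. -/
abbrev RefWord (T X : Type) : Type := List (T ⊕ VarOp X)

/-- The morphism `clr` erasing variable operations and fixing letters of `Σ`. -/
def clr {T X : Type} (r : RefWord T X) : List T :=
  r.filterMap (fun a => match a with | Sum.inl t => some t | Sum.inr _ => none)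

/-- A ref-word is valid for `X`: each `⊢x` and `⊣x` occurs exactly once, `⊢x` before `⊣x`. -/
def ValidRef {T X : Type} (r : RefWord T X) : Prop :=
  ∀ x : X, ∃ u v w : RefWord T X,
    r = u ++ Sum.inr (x, true) :: (v ++ Sum.inr (x, false) :: w) ∧
    ∀ b : Bool, Sum.inr (x, b) ∉ u ∧ Sum.inr (x, b) ∉ v ∧ Sum.inr (x, b) ∉ w

/-- `μ` is the `(X,d)`-mapping `μ^r` induced by the ref-word `r`. -/
def MappingOf {T X : Type} (r : RefWord T X) (μ : X → ℕ × ℕ) : Prop :=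
  ∀ x : X, ∃ u v w : RefWord T X,
    r = u ++ Sum.inr (x, true) :: (v ++ Sum.inr (x, false) :: w) ∧
    μ x = ((clr u).length + 1, (clr u).length + 1 + (clr v).length)

/-- The spanner defined by an extraction grammar (a CFG over `Σ ∪ Γ_X`). -/
def spanner {T X : Type} (G : ContextFreeGrammar (T ⊕ VarOp X)) (d : List T) :
    Set (X → ℕ × ℕ) :=
  {μ | ∃ r : RefWord T X, r ∈ G.language ∧ ValidRef r ∧ clr r = d ∧ MappingOf r μ}

/-- A spanner is context-free if it is definable by an extraction grammar. -/
def IsCFSpanner {T X : Type} (S : List T → Set (X → ℕ × ℕ)) : Prop :=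
  ∃ G : ContextFreeGrammar.{0} (T ⊕ VarOp X), ∀ d : List T, S d = spanner G d

/-! With no capture variables a spanner is Boolean: it is determined by the language of documents
it accepts, and it is context-free exactly when that language is (relabel the terminals of the
extraction grammar along `T ⊕ VarOp X ≃ T`). The natural join of two Boolean spanners is the
Boolean spanner of the intersection of their languages. Both `{aⁿbⁿcᵐ}` and `{aᵐbⁿcⁿ}` (the
reversal of `{cⁿbⁿaᵐ}`) are context-free, but their intersection `{aⁿbⁿcⁿ}` is not, by the pumping
lemma. The pumping lemma is proved with parse trees: in a parse tree of minimal size of a long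
word some nonterminal repeats below itself, and deleting or iterating the part of the tree between
the two occurrences pumps the word. -/

open Relation

inductive ParseTree (T N : Type*) where
  | leaf : T → ParseTree T N
  | node : N → List (ParseTree T N) → ParseTree T N

namespace ParseTree

variable {T N : Type*}

def root : ParseTree T N → Symbol T N
  | leaf a => .terminal a
  | node A _ => .nonterminal A

@[simp] lemma root_leaf (a : T) : (leaf a : ParseTree T N).root = .terminal a := rfl

@[simp] lemma root_node (A : N) (c : List (ParseTree T N)) :
    (node A c).root = .nonterminal A := rfl

mutual
def yield : ParseTree T N → List T
  | leaf a => [a]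
  | node _ c => yields c
def yields : List (ParseTree T N) → List T
  | [] => []
  | t :: ts => yield t ++ yields ts
end

mutual
def size : ParseTree T N → ℕ
  | leaf _ => 1
  | node _ c => sizes c + 1
def sizes : List (ParseTree T N) → ℕ
  | [] => 0
  | t :: ts => size t + sizes ts
end

@[simp] lemma yield_leaf (a : T) : (leaf a : ParseTree T N).yield = [a] := by simp [yield]

lemma yields_eq_flatten (c : List (ParseTree T N)) : yields c = (c.map yield).flatten := by
  induction c <;> simp [yields, *]

lemma sizes_eq_sum (c : List (ParseTree T N)) : sizes c = (c.map size).sum := by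
  induction c <;> simp [sizes, *]

@[simp] lemma yield_node (A : N) (c : List (ParseTree T N)) :
    (node A c).yield = (c.map yield).flatten := by
  rw [yield, yields_eq_flatten]

@[simp] lemma size_node (A : N) (c : List (ParseTree T N)) :
    (node A c).size = (c.map size).sum + 1 := by
  rw [size, sizes_eq_sum]

/-- Subtrees of `t` are the `s` with `ReflTransGen IsChild s t`, proper ones those with
`TransGen IsChild s t`. -/
def IsChild (s t : ParseTree T N) : Prop := ∃ A c, t = node A c ∧ s ∈ c

lemma IsChild.size_lt {s t : ParseTree T N} (h : IsChild s t) : s.size < t.size := by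
  obtain ⟨A, c, rfl, hs⟩ := h
  simpa [Nat.lt_succ_iff] using List.le_sum_of_mem (List.mem_map_of_mem hs)

lemma size_lt_of_transGen {s t : ParseTree T N} (h : TransGen IsChild s t) : s.size < t.size := by
  induction h with
  | single h => exact h.size_lt
  | tail _ h ih => exact ih.trans h.size_lt

end ParseTree

namespace ContextFreeGrammar

open ParseTree

variable {T : Type*} {g : ContextFreeGrammar T}

variable (g) in
inductive IsParseTree : ParseTree T g.NT → Prop
  | leaf (a : T) : IsParseTree (.leaf a)
  | node (r : ContextFreeRule T g.NT) (hr : r ∈ g.rules) (c : List (ParseTree T g.NT))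
      (hc : c.map root = r.output) (hsub : ∀ s ∈ c, IsParseTree s) : IsParseTree (.node r.input c)

lemma produces_of_mem {r : ContextFreeRule T g.NT} (hr : r ∈ g.rules) :
    g.Produces [.nonterminal r.input] r.output :=
  ⟨r, hr, ContextFreeRule.Rewrites.input_output⟩

lemma derives_flatten {u : List (Symbol T g.NT)} {ws : List (List (Symbol T g.NT))}
    (h : List.Forall₂ (fun s w => g.Derives [s] w) u ws) : g.Derives u ws.flatten := by
  induction h with
  | nil => exact Derives.refl []
  | cons hd _ ih => simpa using (hd.append_right _).trans (ih.append_left _)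

lemma IsParseTree.derives {t : ParseTree T g.NT} (ht : g.IsParseTree t) :
    g.Derives [t.root] (t.yield.map .terminal) := by
  induction ht with
  | leaf a => exact Derives.refl _
  | node r hr c hc _ ih =>
    have hchildren : g.Derives r.output (c.map fun s => s.yield.map .terminal).flatten := by
      rw [← hc]
      exact derives_flatten (List.forall₂_map_left_iff.2 (List.forall₂_map_right_iff.2
        (List.forall₂_same.2 ih)))
    simpa [List.map_flatten, Function.comp_def] using (produces_of_mem hr).trans_derives hchildren

lemma IsParseTree.yield_mem_language {t : ParseTree T g.NT} (ht : g.IsParseTree t)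
    (hroot : t.root = .nonterminal g.initial) : t.yield ∈ g.language := by
  rw [mem_language_iff, ← hroot]
  exact ht.derives

lemma exists_parseTrees_of_derives {u : List (Symbol T g.NT)} {w : List T}
    (h : g.Derives u (w.map .terminal)) :
    ∃ c : List (ParseTree T g.NT), (∀ s ∈ c, g.IsParseTree s) ∧ c.map root = u ∧
      (c.map yield).flatten = w := by
  induction h using Relation.ReflTransGen.head_induction_on with
  | refl =>
    refine ⟨w.map .leaf, ?_, by simp [Function.comp_def],
      by simpa [List.flatMap, Function.comp_def] using List.flatMap_singleton' w⟩
    simp only [List.mem_map]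
    rintro _ ⟨a, _, rfl⟩
    exact .leaf a
  | head hp _ ih =>
    obtain ⟨r, hr, hrw⟩ := hp
    obtain ⟨p, q, rfl, rfl⟩ := hrw.exists_parts
    obtain ⟨c, hc, hroot, hyield⟩ := ih
    rw [List.append_assoc] at hroot
    obtain ⟨c₁, c₂₃, rfl, hroot₁, hroot₂₃⟩ := List.map_eq_append_iff.1 hroot
    obtain ⟨c₂, c₃, rfl, hroot₂, hroot₃⟩ := List.map_eq_append_iff.1 hroot₂₃
    refine ⟨c₁ ++ node r.input c₂ :: c₃, ?_, by simp [hroot₁, hroot₃], by simpa using hyield⟩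
    simp only [List.mem_append, List.mem_cons]
    rintro s (hs | rfl | hs)
    · exact hc s (by simp [hs])
    · exact .node r hr c₂ hroot₂ fun s hs => hc s (by simp [hs])
    · exact hc s (by simp [hs])

lemma exists_parseTree_of_mem_language {w : List T} (hw : w ∈ g.language) :
    ∃ t : ParseTree T g.NT, g.IsParseTree t ∧ t.root = .nonterminal g.initial ∧ t.yield = w := by
  obtain ⟨c, hc, hroot, hyield⟩ := exists_parseTrees_of_derives hw
  obtain ⟨t, rfl, ht⟩ := List.map_eq_singleton_iff.1 hroot
  exact ⟨t, hc t (by simp), ht, by simpa using hyield⟩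

theorem induction_of_mem_language (P : Symbol T g.NT → List T → Prop)
    (terminal : ∀ a, P (.terminal a) [a])
    (rule : ∀ r ∈ g.rules, ∀ ws : List (List T), List.Forall₂ P r.output ws →
      P (.nonterminal r.input) ws.flatten)
    {w : List T} (hw : w ∈ g.language) : P (.nonterminal g.initial) w := by
  obtain ⟨t, ht, hroot, rfl⟩ := exists_parseTree_of_mem_language hw
  rw [← hroot]
  clear hroot hw
  induction ht with
  | leaf a => exact terminal a
  | node r hr c hc _ ih =>
    simpa using rule r hr (c.map yield) (hc ▸ List.forall₂_map_left_iff.2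
      (List.forall₂_map_right_iff.2 (List.forall₂_same.2 ih)))

lemma IsParseTree.of_reflTransGen {s t : ParseTree T g.NT} (ht : g.IsParseTree t)
    (hst : ReflTransGen IsChild s t) : g.IsParseTree s := by
  induction hst with
  | refl => exact ht
  | tail _ hbt ih =>
    obtain ⟨A, c, rfl, hb⟩ := hbt
    cases ht with
    | node r hr c hc hsub => exact ih (hsub _ hb)

lemma IsParseTree.exists_context {s t : ParseTree T g.NT} (ht : g.IsParseTree t)
    (hst : ReflTransGen IsChild s t) :
    ∃ u z : List T, t.yield = u ++ s.yield ++ z ∧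
      ∀ s', g.IsParseTree s' → s'.root = s.root →
        ∃ t', g.IsParseTree t' ∧ t'.root = t.root ∧ t'.yield = u ++ s'.yield ++ z ∧
          t'.size + s.size = t.size + s'.size := by
  induction hst with
  | refl => exact ⟨[], [], by simp, fun s' hs' hroot => ⟨s', hs', hroot, by simp, by omega⟩⟩
  | tail _ hbt ih =>
    obtain ⟨A, c, rfl, hb⟩ := hbt
    cases ht with
    | node r hr c hc hsub =>
    obtain ⟨u, z, hyield, plug⟩ := ih (hsub _ hb)
    obtain ⟨c₁, c₂, rfl⟩ := List.append_of_mem hb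
    refine ⟨(c₁.map yield).flatten ++ u, z ++ (c₂.map yield).flatten, by simp [hyield], ?_⟩
    intro s' hs' hroot
    obtain ⟨b', hb', hroot', hyield', hsize'⟩ := plug s' hs' hroot
    refine ⟨ParseTree.node r.input (c₁ ++ b' :: c₂),
      .node r hr _ (by simpa [hroot'] using hc) ?_, rfl, by simp [hyield'], by simp; omega⟩
    simp only [List.mem_append, List.mem_cons]
    rintro x (hx | rfl | hx)
    · exact hsub x (by simp [hx])
    · exact hb'
    · exact hsub x (by simp [hx])

variable (g) in
open Classical in
noncomputable def inputs : Finset g.NT := g.rules.image ContextFreeRule.input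

variable (g) in
def fanout : ℕ := g.rules.sup (fun r => r.output.length) + 1

lemma fanout_pos : 0 < g.fanout := Nat.succ_pos _

lemma length_output_lt_fanout {r : ContextFreeRule T g.NT} (hr : r ∈ g.rules) :
    r.output.length < g.fanout :=
  Nat.lt_succ_of_le (Finset.le_sup (f := fun r => r.output.length) hr)

/-- `F` plays the role of the nonterminals on the path above `t`: without repeated nonterminals
along a path, `t` has height at most `#g.inputs + 1 - #F`. -/
lemma IsParseTree.length_yield_le {t : ParseTree T g.NT} (ht : g.IsParseTree t)
    {F : Finset g.NT} (hF : F ⊆ g.inputs)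
    (hFt : ∀ s A, ReflTransGen IsChild s t → s.root = .nonterminal A → A ∉ F)
    (hrep : ∀ s s', ReflTransGen IsChild s t → TransGen IsChild s' s → s'.root ≠ s.root) :
    t.yield.length ≤ g.fanout ^ (g.inputs.card + 1 - F.card) := by
  classical
  induction ht generalizing F with
  | leaf a => simpa using Nat.one_le_pow _ _ fanout_pos
  | node r hr c hc hsub ih =>
    have hchild : ∀ s ∈ c, IsChild s (.node r.input c) := fun s hs => ⟨r.input, c, rfl, hs⟩
    have hA : r.input ∉ F := hFt _ _ .refl rfl
    have hF' : insert r.input F ⊆ g.inputs :=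
      Finset.insert_subset (Finset.mem_image_of_mem _ hr) hF
    have hcard : (insert r.input F).card = F.card + 1 := Finset.card_insert_of_notMem hA
    have hcard_le := Finset.card_le_card hF'
    have hbound : ∀ s ∈ c, s.yield.length ≤ g.fanout ^ (g.inputs.card - F.card) := by
      intro s hs
      have := ih s hs hF' ?_ ?_
      · rwa [hcard, show g.inputs.card + 1 - (F.card + 1) = g.inputs.card - F.card by omega] at this
      · intro s' A hs' hroot hAF
        rcases Finset.mem_insert.1 hAF with rfl | hAF
        · exact hrep _ _ .refl (.tail' hs' (hchild s hs)) hroot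
        · exact hFt s' A (hs'.tail (hchild s hs)) hroot hAF
      · exact fun s₁ s₂ h₁ => hrep s₁ s₂ (h₁.tail (hchild s hs))
    have hlen : c.length ≤ g.fanout := by
      simpa [← hc] using (length_output_lt_fanout hr).le
    calc (ParseTree.node r.input c).yield.length = (c.map fun s => s.yield.length).sum := by
          simp [List.length_flatten, Function.comp_def]
      _ ≤ c.length * g.fanout ^ (g.inputs.card - F.card) := by
          simpa using
            List.sum_le_card_nsmul (c.map fun s => s.yield.length) _ (by simpa using hbound)
      _ ≤ g.fanout * g.fanout ^ (g.inputs.card - F.card) := Nat.mul_le_mul_right _ hlen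
      _ = g.fanout ^ (g.inputs.card + 1 - F.card) := by
          rw [← pow_succ']
          congr 1
          omega

lemma IsParseTree.exists_repeat {t : ParseTree T g.NT} (ht : g.IsParseTree t)
    (hlen : g.fanout ^ (g.inputs.card + 1) < t.yield.length) :
    ∃ s s', ReflTransGen IsChild s t ∧ TransGen IsChild s' s ∧ s'.root = s.root := by
  by_contra! hrep
  have := ht.length_yield_le (Finset.empty_subset _) (by simp) hrep
  simp only [Finset.card_empty, Nat.sub_zero] at this
  omega

theorem exists_pumping (g : ContextFreeGrammar T) :
    ∃ K : ℕ, ∀ w ∈ g.language, K < w.length →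
      ∃ u p y q z : List T, w = u ++ p ++ y ++ q ++ z ∧ p ++ q ≠ [] ∧
        ∀ i : ℕ, u ++ (List.replicate i p).flatten ++ y ++ (List.replicate i q).flatten ++ z ∈
          g.language := by
  refine ⟨g.fanout ^ (g.inputs.card + 1), fun w hw hlen => ?_⟩
  obtain ⟨t, ⟨ht, hroot, rfl⟩, hmin⟩ := WellFounded.has_min (InvImage.wf size wellFounded_lt)
    {t | g.IsParseTree t ∧ t.root = .nonterminal g.initial ∧ t.yield = w}
    (exists_parseTree_of_mem_language hw)
  obtain ⟨s, s', hs, hs', hroot'⟩ := ht.exists_repeat hlen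
  obtain ⟨u, z, hyield, plug⟩ := ht.exists_context hs
  obtain ⟨p, q, hyield', plug'⟩ := (ht.of_reflTransGen hs).exists_context hs'.to_reflTransGen
  have hs'_tree := ht.of_reflTransGen (hs'.to_reflTransGen.trans hs)
  have hpump : ∀ i, ∃ sᵢ, g.IsParseTree sᵢ ∧ sᵢ.root = s.root ∧
      sᵢ.yield = (List.replicate i p).flatten ++ s'.yield ++ (List.replicate i q).flatten := by
    intro i
    induction i with
    | zero => exact ⟨s', hs'_tree, hroot', by simp⟩
    | succ i ih =>
      obtain ⟨sᵢ, hsᵢ, hrootᵢ, hyieldᵢ⟩ := ih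
      obtain ⟨s'', hs'', hroot'', hyield'', -⟩ := plug' sᵢ hsᵢ (hrootᵢ.trans hroot'.symm)
      refine ⟨s'', hs'', hroot'', ?_⟩
      rw [List.replicate_succ, List.replicate_succ' (a := q), hyield'', hyieldᵢ]
      simp
  refine ⟨u, p, s'.yield, q, z, by simp [hyield, hyield'], fun hpq => ?_, fun i => ?_⟩
  · -- if `p ++ q = []`, grafting `s'` in place of `s` gives a smaller parse tree of `w`
    obtain ⟨rfl, rfl⟩ := List.append_eq_nil_iff.1 hpq
    obtain ⟨t', ht', hroot_t', hyield_t', hsize⟩ := plug s' hs'_tree hroot'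
    refine hmin t' ⟨ht', hroot_t'.trans hroot, by simp [hyield_t', hyield, hyield']⟩ ?_
    have := size_lt_of_transGen hs'
    simp only [InvImage]
    omega
  · obtain ⟨sᵢ, hsᵢ, hrootᵢ, hyieldᵢ⟩ := hpump i
    obtain ⟨t', ht', hroot_t', hyield_t', -⟩ := plug sᵢ hsᵢ hrootᵢ
    simpa [hyield_t', hyieldᵢ] using ht'.yield_mem_language (hroot_t'.trans hroot)

end ContextFreeGrammar

lemma List.Pairwise.eq_of_append_self {α : Type*} [PartialOrder α] {l : List α}
    (h : (l ++ l).Pairwise (· ≤ ·)) : ∀ a ∈ l, ∀ b ∈ l, a = b :=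
  fun a ha b hb =>
    le_antisymm ((List.pairwise_append.1 h).2.2 a ha b hb)
      ((List.pairwise_append.1 h).2.2 b hb a ha)

open List in
def abc : Language (Fin 3) := {w | ∃ n, w = replicate n 0 ++ replicate n 1 ++ replicate n 2}

lemma count_eq_of_mem_abc {w : List (Fin 3)} (hw : w ∈ abc) (a b : Fin 3) :
    w.count a = w.count b := by
  obtain ⟨n, rfl⟩ := hw
  fin_cases a <;> fin_cases b <;> simp [List.count_replicate]

lemma pairwise_le_of_mem_abc {w : List (Fin 3)} (hw : w ∈ abc) : w.Pairwise (· ≤ ·) := by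
  obtain ⟨n, rfl⟩ := hw
  simp [List.pairwise_append, List.pairwise_replicate]

theorem not_isContextFree_abc : ¬ abc.IsContextFree := by
  rintro ⟨g, hg⟩
  obtain ⟨K, hK⟩ := g.exists_pumping
  set w := List.replicate (K + 1) (0 : Fin 3) ++ List.replicate (K + 1) 1 ++
    List.replicate (K + 1) 2
  have hw : w ∈ abc := ⟨K + 1, rfl⟩
  obtain ⟨u, p, y, q, z, hsplit, hpq, hpump⟩ := hK w (hg ▸ hw) (by simp [w]; omega)
  rw [hg] at hpump
  have hdown : u ++ y ++ z ∈ abc := by simpa using hpump 0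
  have hup : u ++ (p ++ p) ++ y ++ (q ++ q) ++ z ∈ abc := by simpa using hpump 2
  -- pumping down removes the same number of each letter, and at least one letter
  have hmem : ∀ a : Fin 3, a ∈ p ∨ a ∈ q := by
    obtain ⟨b, hb⟩ := List.exists_mem_of_ne_nil _ hpq
    intro a
    have hcount := count_eq_of_mem_abc hw a b
    have hcount_down := count_eq_of_mem_abc hdown a b
    have hb_pos := List.count_pos_iff.2 hb
    rw [hsplit] at hcount
    simp only [List.count_append] at hcount hcount_down hb_pos
    rw [← List.mem_append, ← List.count_pos_iff, List.count_append]
    omega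
  -- pumping up keeps the word sorted, so `p` and `q` are each a power of one letter
  have hsorted := pairwise_le_of_mem_abc hup
  have hp := (hsorted.sublist
    (List.sublist_append_of_sublist_left (List.sublist_append_of_sublist_left
      (List.sublist_append_of_sublist_left (List.sublist_append_right _ _))))).eq_of_append_self
  have hq := (hsorted.sublist
    (List.sublist_append_of_sublist_left (List.sublist_append_right _ _))).eq_of_append_self
  -- two of the three letters lie in the same one of `p` and `q`
  have := hmem 0
  have := hmem 1
  have := hmem 2
  grind

section BlockLanguage

open List ContextFreeGrammar

variable {α : Type*}

def blockLang (x y z : α) : Language α :=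
  {w | ∃ n m, w = replicate n x ++ replicate n y ++ replicate m z}

/-- Reducible, so that numerals and `simp` see `(blockGrammar x y z).NT` as `Fin 3`. -/
abbrev blockGrammar [DecidableEq α] (x y z : α) : ContextFreeGrammar α where
  NT := Fin 3
  initial := 0
  rules := {⟨0, [.nonterminal 1, .nonterminal 2]⟩,
            ⟨1, [.terminal x, .nonterminal 1, .terminal y]⟩, ⟨1, []⟩,
            ⟨2, [.terminal z, .nonterminal 2]⟩, ⟨2, []⟩}

variable [DecidableEq α] (x y z : α)

lemma blockGrammar_derives_one (n : ℕ) : (blockGrammar x y z).Derives [.nonterminal 1]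
    ((replicate n x ++ replicate n y).map .terminal) := by
  induction n with
  | zero => simpa using (produces_of_mem (g := blockGrammar x y z) (r := ⟨1, []⟩) (by simp)).single
  | succ n ih =>
    have hstep := produces_of_mem (g := blockGrammar x y z)
      (r := ⟨1, [.terminal x, .nonterminal 1, .terminal y]⟩) (by simp)
    have := hstep.trans_derives ((ih.append_left [.terminal x]).append_right [.terminal y])
    rw [replicate_succ, replicate_succ' (a := y)]
    simpa using this

lemma blockGrammar_derives_two (m : ℕ) : (blockGrammar x y z).Derives [.nonterminal 2]
    ((replicate m z).map .terminal) := by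
  induction m with
  | zero => simpa using (produces_of_mem (g := blockGrammar x y z) (r := ⟨2, []⟩) (by simp)).single
  | succ m ih =>
    have hstep := produces_of_mem (g := blockGrammar x y z)
      (r := ⟨2, [.terminal z, .nonterminal 2]⟩) (by simp)
    simpa [replicate_succ] using hstep.trans_derives (ih.append_left [.terminal z])

/-- The words derivable from each symbol of `blockGrammar`. -/
def blockYield : Symbol α (Fin 3) → List α → Prop
  | .terminal a, w => w = [a]
  | .nonterminal 0, w => w ∈ blockLang x y z
  | .nonterminal 1, w => ∃ n, w = replicate n x ++ replicate n y
  | .nonterminal 2, w => ∃ m, w = replicate m z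

lemma language_blockGrammar : (blockGrammar x y z).language = blockLang x y z := by
  ext w
  constructor
  · refine induction_of_mem_language (g := blockGrammar x y z) (blockYield x y z) (fun _ => rfl) ?_
    intro r hr ws hws
    simp only [Finset.mem_insert, Finset.mem_singleton] at hr
    rcases hr with rfl | rfl | rfl | rfl | rfl <;>
      simp only [forall₂_cons_left_iff, forall₂_nil_left_iff] at hws
    · obtain ⟨_, _, ⟨n, rfl⟩, ⟨_, _, ⟨m, rfl⟩, rfl, rfl⟩, rfl⟩ := hws
      exact ⟨n, m, by simp⟩
    · obtain ⟨_, _, rfl, ⟨_, _, ⟨n, rfl⟩, ⟨_, _, rfl, rfl, rfl⟩, rfl⟩, rfl⟩ := hws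
      exact ⟨n + 1, by rw [replicate_succ, replicate_succ' (a := y)]; simp⟩
    · exact ⟨0, by simp [hws]⟩
    · obtain ⟨_, _, rfl, ⟨_, _, ⟨m, rfl⟩, rfl, rfl⟩, rfl⟩ := hws
      exact ⟨m + 1, by simp [replicate_succ]⟩
    · exact ⟨0, by simp [hws]⟩
  · rintro ⟨n, m, rfl⟩
    have hstep := produces_of_mem (g := blockGrammar x y z)
      (r := ⟨0, [.nonterminal 1, .nonterminal 2]⟩) (by simp)
    have := hstep.trans_derives ((blockGrammar_derives_one x y z n).append_right _ |>.trans
      ((blockGrammar_derives_two x y z m).append_left _))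
    simpa [mem_language_iff] using this

theorem isContextFree_blockLang (x y z : α) : (blockLang x y z).IsContextFree := by
  classical
  exact ⟨blockGrammar x y z, language_blockGrammar x y z⟩

end BlockLanguage

lemma mem_abc_iff (w : List (Fin 3)) :
    w ∈ abc ↔ w ∈ blockLang 0 1 2 ∧ w ∈ (blockLang 2 1 0).reverse := by
  constructor
  · rintro ⟨n, rfl⟩
    exact ⟨⟨n, n, rfl⟩, ⟨n, n, by simp⟩⟩
  · rintro ⟨⟨n, m, rfl⟩, ⟨n', m', hrev⟩⟩
    have hcount := fun a : Fin 3 => congrArg (List.count a) hrev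
    have h0 := hcount 0
    have h1 := hcount 1
    have h2 := hcount 2
    simp [List.count_replicate] at h0 h1 h2
    obtain rfl : m = n := by omega
    exact ⟨m, rfl⟩

def Symbol.mapTerminal {T T' N : Type*} (f : T → T') : Symbol T N → Symbol T' N
  | .terminal a => .terminal (f a)
  | .nonterminal A => .nonterminal A

def ContextFreeRule.mapTerminal {T T' N : Type*} (f : T → T') (r : ContextFreeRule T N) :
    ContextFreeRule T' N :=
  ⟨r.input, r.output.map (Symbol.mapTerminal f)⟩

namespace ContextFreeGrammar

variable {T T' : Type*}

open Classical in
/-- Reducible, so that `simp` and instance search see `(g.mapTerminal f).NT` as `g.NT`. -/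
noncomputable abbrev mapTerminal (f : T → T') (g : ContextFreeGrammar T) : ContextFreeGrammar T' :=
  ⟨g.NT, g.initial, g.rules.image (ContextFreeRule.mapTerminal f)⟩

lemma Derives.mapTerminal {g : ContextFreeGrammar T} (f : T → T') {u v : List (Symbol T g.NT)}
    (h : g.Derives u v) :
    (g.mapTerminal f).Derives (u.map (Symbol.mapTerminal f)) (v.map (Symbol.mapTerminal f)) := by
  induction h with
  | refl => exact Derives.refl _
  | tail _ hstep ih =>
    obtain ⟨r, hr, hrw⟩ := hstep
    obtain ⟨p, q, rfl, rfl⟩ := hrw.exists_parts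
    refine ih.trans_produces ⟨r.mapTerminal f, by classical exact Finset.mem_image_of_mem _ hr, ?_⟩
    have := ContextFreeRule.rewrites_of_exists_parts (r.mapTerminal f)
      (p.map (Symbol.mapTerminal f)) (q.map (Symbol.mapTerminal f))
    simpa [ContextFreeRule.mapTerminal, Symbol.mapTerminal] using this

lemma map_mem_language_mapTerminal {g : ContextFreeGrammar T} (f : T → T') {w : List T}
    (h : w ∈ g.language) : w.map f ∈ (g.mapTerminal f).language := by
  simpa [mem_language_iff, mapTerminal, Symbol.mapTerminal, Function.comp_def] using h.mapTerminal f

lemma mapTerminal_mapTerminal {f : T → T'} {f' : T' → T} (hf : Function.LeftInverse f' f)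
    (g : ContextFreeGrammar T) : (g.mapTerminal f).mapTerminal f' = g := by
  classical
  have hsymbol :
      Function.LeftInverse (Symbol.mapTerminal (N := g.NT) f') (Symbol.mapTerminal f) := by
    rintro (a | A)
    · exact congrArg Symbol.terminal (hf a)
    · rfl
  have hrule : Function.LeftInverse (ContextFreeRule.mapTerminal (N := g.NT) f')
      (ContextFreeRule.mapTerminal f) := by
    rintro ⟨A, u⟩
    simp [ContextFreeRule.mapTerminal, Function.comp_def, hsymbol _]
  obtain ⟨NT, initial, rules⟩ := g
  simp only [mapTerminal, ContextFreeGrammar.mk.injEq, heq_eq_eq, true_and]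
  rw [Finset.image_image, hrule.comp_eq_id, Finset.image_id]

lemma mem_language_mapTerminal_equiv (g : ContextFreeGrammar T) (e : T ≃ T') {w : List T'} :
    w ∈ (g.mapTerminal e).language ↔ w.map e.symm ∈ g.language := by
  constructor
  · intro h
    have := map_mem_language_mapTerminal e.symm h
    rwa [mapTerminal_mapTerminal e.symm_apply_apply] at this
  · intro h
    simpa using map_mem_language_mapTerminal e h

end ContextFreeGrammar

section BooleanSpanner

variable {T X : Type}

lemma clr_map_inl (d : List T) : clr (X := X) (d.map Sum.inl) = d := by
  simp [clr, List.filterMap_map]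

lemma map_inl_clr [IsEmpty X] (r : RefWord T X) : (clr r).map Sum.inl = r := by
  induction r with
  | nil => rfl
  | cons a r ih =>
    obtain a | v := a
    · simpa [clr] using ih
    · exact isEmptyElim v.1

lemma mem_spanner_iff [IsEmpty X] (G : ContextFreeGrammar (T ⊕ VarOp X)) (d : List T)
    (μ : X → ℕ × ℕ) : μ ∈ spanner G d ↔ d.map Sum.inl ∈ G.language := by
  constructor
  · rintro ⟨r, hr, -, rfl, -⟩
    rwa [map_inl_clr]
  · exact fun h => ⟨d.map Sum.inl, h, isEmptyElim, clr_map_inl d, isEmptyElim⟩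

theorem isCFSpanner_iff_isContextFree [IsEmpty X] {S : List T → Set (X → ℕ × ℕ)}
    {L : Language T} (hS : ∀ d μ, μ ∈ S d ↔ d ∈ L) : IsCFSpanner S ↔ L.IsContextFree := by
  let e := Equiv.sumEmpty T (VarOp X)
  constructor
  · rintro ⟨G, hG⟩
    refine ⟨G.mapTerminal e, ?_⟩
    ext d
    rw [ContextFreeGrammar.mem_language_mapTerminal_equiv, ← hS d isEmptyElim, hG,
      mem_spanner_iff]
    simp [e, Function.comp_def]
  · rintro ⟨g, rfl⟩
    refine ⟨g.mapTerminal e.symm, fun d => Set.ext fun μ => ?_⟩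
    rw [hS, mem_spanner_iff, ContextFreeGrammar.mem_language_mapTerminal_equiv]
    simp [e, Function.comp_def]

end BooleanSpanner

/-- The class of context-free spanners is not closed under natural join: there are context-free
spanners `S1` (over variables `X1`) and `S2` (over `X2`) whose natural join is not context-free. -/
theorem stmt7 :
    ∃ (X : Type) (X1 X2 : Set X)
      (S1 : List (Fin 3) → Set (↥X1 → ℕ × ℕ)) (S2 : List (Fin 3) → Set (↥X2 → ℕ × ℕ)),
      IsCFSpanner S1 ∧ IsCFSpanner S2 ∧
      ¬ IsCFSpanner (fun d => {μ : ↥(X1 ∪ X2) → ℕ × ℕ |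
          (fun x : ↥X1 => μ ⟨x.1, Set.mem_union_left X2 x.2⟩) ∈ S1 d ∧
          (fun x : ↥X2 => μ ⟨x.1, Set.mem_union_right X1 x.2⟩) ∈ S2 d}) := by
  refine ⟨Empty, ∅, ∅, fun d => {_μ | d ∈ blockLang 0 1 2},
    fun d => {_μ | d ∈ (blockLang 2 1 0).reverse}, ?_, ?_, ?_⟩
  · exact (isCFSpanner_iff_isContextFree (L := blockLang 0 1 2) fun _ _ => Iff.rfl).2
      (isContextFree_blockLang 0 1 2)
  · exact (isCFSpanner_iff_isContextFree (L := (blockLang 2 1 0).reverse) fun _ _ => Iff.rfl).2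
      (isContextFree_blockLang 2 1 0).reverse
  · exact mt (isCFSpanner_iff_isContextFree fun d _ => (mem_abc_iff d).symm).1
      not_isContextFree_abc
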